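/- Let f : ℂ^N → ℝ be differentiable (over ℝ) with L-Lipschitz gradient ∇f for some L > 0, let h : ℂ^N → ℝ be convex and differentiable, and set F = h + f. Let C ⊆ ℂ^N be a nonempty closed convex set, and suppose F* := inf_{x ∈ C} F(x) is finite. Let η > 0, and let a sequence x₁, x₂, … in C be generated as follows: for each k, B_k ∈ ℂ^{N×N} is Hermitian with η·I_N ⪯ B_k, the stepsize satisfies 0 < α_k ≤ η/L, and x_{k+1} is a minimizer over C of x̄ ↦ S_h(x̄, x_k, ∇f(x_k), B_k, α_k). Then for every K ≥ 1, min_{1 ≤ k ≤ K} ‖x_{k+1} − x_k‖² ≤ 2·(F(x₁) − F*)/(L·K). -/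

import Mathlib

/-!
Each step decreases `F` by at least `(L/2)‖x_{k+1} − x_k‖²`. Indeed, the descent lemma bounds
`f(x_{k+1})` by its linearization at `x_k` plus `(L/2)‖d‖²`, `d = x_{k+1} − x_k`; and comparing
the minimizer `x_{k+1}` of the surrogate with the points of the segment towards `x_k` (which lie
in `C`, and where `h` lies below its chord) shows that the linear term plus the change of `h` is
at most `−(1/α_k)‖d‖²_{B_k} ≤ −L‖d‖²`. Telescoping these decreases down to `F*` bounds `K` times
the smallest step.
-/

open scoped ComplexOrder

noncomputable section

/-- `ℂ^N` with the standard complex inner product (conjugate-linear in the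
first argument) and the induced norm. -/
abbrev EC (N : ℕ) := EuclideanSpace ℂ (Fin N)

/-- Weighted squared norm `‖z‖_W² = zᴴ W z` (its real part, which is the full
value when `W` is Hermitian). -/
def wnorm2 {N : ℕ} (W : Matrix (Fin N) (Fin N) ℂ) (z : EC N) : ℝ :=
  (dotProduct (fun i => starRingEnd ℂ (z i)) (W.mulVec (fun i => z i))).re

/-- Surrogate `S_h(x̄, x, g, W, α) = Re⟨g, x̄ − x⟩ + (1/(2α))‖x̄ − x‖_W² + h(x̄) − h(x)`. -/
def Sh {N : ℕ} (h : EC N → ℝ) (W : Matrix (Fin N) (Fin N) ℂ) (α : ℝ)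
    (g x xb : EC N) : ℝ :=
  (inner ℂ g (xb - x) : ℂ).re + (1 / (2 * α)) * wnorm2 W (xb - x) + h xb - h x

/-- `D_h^C(x, g, W, α) = −(2/α)·inf_{x̄ ∈ C} S_h(x̄, x, g, W, α)`. -/
def Dh {N : ℕ} (h : EC N → ℝ) (C : Set (EC N)) (W : Matrix (Fin N) (Fin N) ℂ)
    (α : ℝ) (g x : EC N) : ℝ :=
  -(2 / α) * sInf ((fun xb => Sh h W α g x xb) '' C)

/-- The real-linear continuous functional `d ↦ Re⟨g, d⟩`, used to say that a
real-differentiable `f : ℂ^N → ℝ` has gradient `g` at a point. -/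
def gradDual {N : ℕ} (g : EC N) : EC N →L[ℝ] ℝ :=
  Complex.reCLM.comp ((innerSL ℂ g).restrictScalars ℝ)

/-- The rank-one matrix `u·uᴴ` with entries `uᵢ · conj(uⱼ)`. -/
def rankOne {N : ℕ} (u : EC N) : Matrix (Fin N) (Fin N) ℂ :=
  Matrix.vecMulVec (fun i => u i) (fun i => starRingEnd ℂ (u i))

end

theorem le_add_fderiv_add_sq_of_lipschitz {E : Type*} [NormedAddCommGroup E] [NormedSpace ℝ E]
    {f : E → ℝ} {f' : E → E →L[ℝ] ℝ} {L : ℝ} (hf : ∀ z, HasFDerivAt f (f' z) z)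
    (hf' : ∀ z₁ z₂, ‖f' z₁ - f' z₂‖ ≤ L * ‖z₁ - z₂‖) (x y : E) :
    f y ≤ f x + f' x (y - x) + L / 2 * ‖y - x‖ ^ 2 := by
  set d := y - x
  set φ : ℝ → ℝ := fun t => f (x + t • d) - t * f' x d - L / 2 * t ^ 2 * ‖d‖ ^ 2
  have hφ : ∀ t, HasDerivAt φ ((f' (x + t • d) - f' x) d - L * t * ‖d‖ ^ 2) t := by
    intro t
    have hline : HasDerivAt (fun t : ℝ => x + t • d) d t := by
      simpa using ((hasDerivAt_id t).smul_const d).const_add x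
    have := (((hf _).comp_hasDerivAt t hline).sub ((hasDerivAt_id t).mul_const (f' x d))).sub
      (((hasDerivAt_pow 2 t).const_mul (L / 2)).mul_const (‖d‖ ^ 2))
    refine this.congr_deriv ?_
    simp only [FunLike.coe_sub, Pi.sub_apply]
    ring
  have hφ' : ∀ t ∈ interior (Set.Icc (0 : ℝ) 1),
      (f' (x + t • d) - f' x) d - L * t * ‖d‖ ^ 2 ≤ 0 := by
    intro t ht
    rw [interior_Icc] at ht
    have hlip := hf' (x + t • d) x
    rw [add_sub_cancel_left, norm_smul, Real.norm_of_nonneg ht.1.le] at hlip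
    have : (f' (x + t • d) - f' x) d ≤ L * t * ‖d‖ ^ 2 :=
      calc (f' (x + t • d) - f' x) d ≤ ‖f' (x + t • d) - f' x‖ * ‖d‖ :=
            (Real.le_norm_self _).trans (ContinuousLinearMap.le_opNorm _ _)
        _ ≤ L * (t * ‖d‖) * ‖d‖ := by gcongr
        _ = L * t * ‖d‖ ^ 2 := by ring
    linarith
  have hanti := antitoneOn_of_hasDerivWithinAt_nonpos (convex_Icc 0 1)
    (fun t _ => (hφ t).continuousAt.continuousWithinAt) (fun t _ => (hφ t).hasDerivWithinAt) hφ'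
  have h01 := hanti (Set.left_mem_Icc.2 zero_le_one) (Set.right_mem_Icc.2 zero_le_one) zero_le_one
  simp only [φ, zero_smul, one_smul, add_zero, add_sub_cancel, d] at h01
  linarith

theorem le_neg_two_mul_of_forall_mem_Ioo {a b : ℝ}
    (h : ∀ t ∈ Set.Ioo (0 : ℝ) 1, a + b ≤ (1 - t) * a + (1 - t) ^ 2 * b) : a ≤ -2 * b := by
  have hlim : Filter.Tendsto (fun t : ℝ => (t - 2) * b) (nhdsWithin 0 (Set.Ioi 0))
      (nhds ((0 - 2) * b)) :=
    ((continuous_id.sub continuous_const).mul continuous_const).continuousWithinAt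
  refine le_of_tendsto_of_tendsto tendsto_const_nhds (by simpa using hlim) ?_
  filter_upwards [Ioo_mem_nhdsGT zero_lt_one] with t ht
  have hineq := h t ht
  have : t * a ≤ t * ((t - 2) * b) := by linarith
  exact le_of_mul_le_mul_left this ht.1

theorem exists_mul_le_sub_of_add_le {a s : ℕ → ℝ} (hstep : ∀ k, 1 ≤ k → a (k + 1) + s k ≤ a k)
    {m : ℝ} {K : ℕ} (hK : 1 ≤ K) (hm : m ≤ a (K + 1)) :
    ∃ k, 1 ≤ k ∧ k ≤ K ∧ K * s k ≤ a 1 - m := by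
  have htelescope : ∀ n, a (n + 1) + ∑ k ∈ Finset.Icc 1 n, s k ≤ a 1 := by
    intro n
    induction n with
    | zero => simp
    | succ n ih =>
      rw [Finset.sum_Icc_succ_top (by omega)]
      linarith [hstep (n + 1) (by omega)]
  obtain ⟨k, hk, hmin⟩ := Finset.exists_min_image (Finset.Icc 1 K) s ⟨1, by simp [hK]⟩
  rw [Finset.mem_Icc] at hk
  refine ⟨k, hk.1, hk.2, ?_⟩
  have hsum := Finset.card_nsmul_le_sum (Finset.Icc 1 K) s (s k) hmin
  rw [Nat.card_Icc, Nat.add_sub_cancel, nsmul_eq_mul] at hsum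
  linarith [htelescope K]

section

variable {N : ℕ}

theorem norm_gradDual_sub_le (g₁ g₂ : EC N) :
    ‖gradDual g₁ - gradDual g₂‖ ≤ ‖g₁ - g₂‖ := by
  refine ContinuousLinearMap.opNorm_le_bound _ (norm_nonneg _) fun d => ?_
  calc ‖(gradDual g₁ - gradDual g₂) d‖ = |(inner ℂ (g₁ - g₂) d : ℂ).re| := by
        simp [gradDual]
    _ ≤ ‖(inner ℂ (g₁ - g₂) d : ℂ)‖ := Complex.abs_re_le_norm _
    _ ≤ ‖g₁ - g₂‖ * ‖d‖ := norm_inner_le_norm _ _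

theorem mul_norm_sq_le_wnorm2 {W : Matrix (Fin N) (Fin N) ℂ} {η : ℝ}
    (hW : (W - η • (1 : Matrix (Fin N) (Fin N) ℂ)).PosSemidef) (z : EC N) :
    η * ‖z‖ ^ 2 ≤ wnorm2 W z := by
  have hnonneg := hW.dotProduct_mulVec_nonneg (WithLp.ofLp z)
  have hnorm : star (WithLp.ofLp z) ⬝ᵥ WithLp.ofLp z = ((‖z‖ ^ 2 : ℝ) : ℂ) := by
    rw [dotProduct_comm, ← EuclideanSpace.inner_eq_star_dotProduct, inner_self_eq_norm_sq_to_K]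
    norm_cast
  rw [Matrix.sub_mulVec, dotProduct_sub, Matrix.smul_mulVec, Matrix.one_mulVec,
    dotProduct_smul, hnorm, Complex.real_smul, ← Complex.ofReal_mul] at hnonneg
  have := (Complex.le_def.mp hnonneg).1
  rw [Complex.zero_re, Complex.sub_re, Complex.ofReal_re] at this
  unfold wnorm2
  exact sub_nonneg.mp this

theorem wnorm2_smul (W : Matrix (Fin N) (Fin N) ℂ) (r : ℝ) (z : EC N) :
    wnorm2 W (r • z) = r ^ 2 * wnorm2 W z := by
  have hconj : (fun i => starRingEnd ℂ ((r • z) i)) = (r : ℂ) • fun i => starRingEnd ℂ (z i) := by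
    funext i
    simp [Complex.real_smul]
  have hvec : (fun i => (r • z) i) = (r : ℂ) • fun i => z i := by
    funext i
    simp [Complex.real_smul]
  unfold wnorm2
  rw [hconj, hvec, Matrix.mulVec_smul, smul_dotProduct, dotProduct_smul, smul_eq_mul,
    smul_eq_mul, ← mul_assoc, ← Complex.ofReal_mul, Complex.re_ofReal_mul]
  ring

theorem Sh_le_of_isMinOn {h : EC N → ℝ} {C : Set (EC N)} (hconv : ConvexOn ℝ C h)
    (W : Matrix (Fin N) (Fin N) ℂ) (α : ℝ) (g : EC N) {u v : EC N} (hu : u ∈ C) (hv : v ∈ C)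
    (hmin : IsMinOn (fun xb => Sh h W α g v xb) C u) :
    Sh h W α g v u ≤ -(1 / (2 * α) * wnorm2 W (u - v)) := by
  set b := 1 / (2 * α) * wnorm2 W (u - v)
  set a := (inner ℂ g (u - v) : ℂ).re + h u - h v
  have hSh : Sh h W α g v u = a + b := by unfold Sh; ring
  suffices a ≤ -2 * b by linarith
  refine le_neg_two_mul_of_forall_mem_Ioo fun t ht => ?_
  have h1t : 0 ≤ 1 - t := by linarith [ht.2]
  have hp : (1 - t) • u + t • v ∈ C := hconv.1 hu hv h1t ht.1.le (by ring)
  have hhp := hconv.2 hu hv h1t ht.1.le (by ring)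
  have hpv : (1 - t) • u + t • v - v = (1 - t) • (u - v) := by module
  have hSp : Sh h W α g v ((1 - t) • u + t • v) ≤ (1 - t) * a + (1 - t) ^ 2 * b := by
    unfold Sh
    rw [hpv, wnorm2_smul, ← Complex.coe_smul, inner_smul_right, Complex.re_ofReal_mul]
    simp only [smul_eq_mul] at hhp
    linarith
  exact hSh ▸ (hmin hp).trans hSp

theorem sufficient_decrease {f : EC N → ℝ} {gradf : EC N → EC N} {L : ℝ} (hL : 0 < L)
    (hfdiff : ∀ z : EC N, HasFDerivAt f (gradDual (gradf z)) z)
    (hlip : ∀ z₁ z₂ : EC N, ‖gradf z₁ - gradf z₂‖ ≤ L * ‖z₁ - z₂‖)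
    {h : EC N → ℝ} {C : Set (EC N)} (hconv : ConvexOn ℝ C h)
    {W : Matrix (Fin N) (Fin N) ℂ} {η α : ℝ}
    (hW : (W - η • (1 : Matrix (Fin N) (Fin N) ℂ)).PosSemidef) (hα : 0 < α) (hαη : α ≤ η / L)
    {u v : EC N} (hu : u ∈ C) (hv : v ∈ C)
    (hmin : IsMinOn (fun xb => Sh h W α (gradf v) v xb) C u) :
    h u + f u + L / 2 * ‖u - v‖ ^ 2 ≤ h v + f v := by
  have hdescent : f u ≤ f v + (inner ℂ (gradf v) (u - v) : ℂ).re + L / 2 * ‖u - v‖ ^ 2 :=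
    le_add_fderiv_add_sq_of_lipschitz hfdiff
      (fun z₁ z₂ => (norm_gradDual_sub_le _ _).trans (hlip z₁ z₂)) v u
  have hSh := Sh_le_of_isMinOn hconv W α (gradf v) hu hv hmin
  unfold Sh at hSh
  have hquad : α * L * ‖u - v‖ ^ 2 ≤ wnorm2 W (u - v) :=
    calc α * L * ‖u - v‖ ^ 2 ≤ η * ‖u - v‖ ^ 2 := by
          gcongr; exact (le_div_iff₀ hL).mp hαη
      _ ≤ wnorm2 W (u - v) := mul_norm_sq_le_wnorm2 hW (u - v)
  have hstep : L * ‖u - v‖ ^ 2 ≤ 2 * (1 / (2 * α) * wnorm2 W (u - v)) := by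
    have : 2 * (1 / (2 * α) * wnorm2 W (u - v)) = wnorm2 W (u - v) / α := by field_simp
    rw [this, le_div_iff₀ hα]
    linarith
  linarith

end

theorem stmt14_general {N : ℕ} (f : EC N → ℝ) (gradf : EC N → EC N) (L : ℝ) (hL : 0 < L)
    (hfdiff : ∀ z : EC N, HasFDerivAt f (gradDual (gradf z)) z)
    (hlip : ∀ z₁ z₂ : EC N, ‖gradf z₁ - gradf z₂‖ ≤ L * ‖z₁ - z₂‖)
    (h : EC N → ℝ) (hconv : ConvexOn ℝ Set.univ h)
    (F : EC N → ℝ) (hF : F = fun z => h z + f z)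
    (C : Set (EC N)) (hCcv : Convex ℝ C)
    (Fstar : ℝ) (hFstar : IsGLB (F '' C) Fstar)
    (η : ℝ)
    (x : ℕ → EC N) (B : ℕ → Matrix (Fin N) (Fin N) ℂ) (α : ℕ → ℝ)
    (hxC : ∀ k, 1 ≤ k → x k ∈ C)
    (hBlb : ∀ k, 1 ≤ k → (B k - η • (1 : Matrix (Fin N) (Fin N) ℂ)).PosSemidef)
    (hαpos : ∀ k, 1 ≤ k → 0 < α k) (hαle : ∀ k, 1 ≤ k → α k ≤ η / L)
    (hupd : ∀ k, 1 ≤ k →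
      IsMinOn (fun xb => Sh h (B k) (α k) (gradf (x k)) (x k) xb) C (x (k + 1))) :
    ∀ K : ℕ, 1 ≤ K → ∃ k, 1 ≤ k ∧ k ≤ K ∧
      ‖x (k + 1) - x k‖ ^ 2 ≤ 2 * (F (x 1) - Fstar) / (L * K) := by
  intro K hK
  have hdecrease : ∀ k, 1 ≤ k → F (x (k + 1)) + L / 2 * ‖x (k + 1) - x k‖ ^ 2 ≤ F (x k) :=
    fun k hk => hF ▸ sufficient_decrease hL hfdiff hlip (hconv.subset (Set.subset_univ C) hCcv)
      (hBlb k hk) (hαpos k hk) (hαle k hk) (hxC (k + 1) (by omega)) (hxC k hk) (hupd k hk)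
  obtain ⟨k, hk1, hkK, hk⟩ := exists_mul_le_sub_of_add_le (a := fun k => F (x k)) hdecrease hK
    (hFstar.1 ⟨x (K + 1), hxC (K + 1) (by omega), rfl⟩)
  refine ⟨k, hk1, hkK, ?_⟩
  rw [le_div_iff₀ (by positivity)]
  linarith

/-- Sublinear rate for the minimal step length. Let `f` be
real-differentiable with `L`-Lipschitz gradient, `h` convex differentiable,
`F = h + f`, `C` nonempty closed convex with finite infimum `F*` of `F` over
`C`. Suppose the sequence `x₁, x₂, …` in `C` is generated with Hermitian
`B_k ⪰ η·I` (`η > 0`), stepsizes `0 < α_k ≤ η/L`, and `x_{k+1}` a minimizer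
over `C` of `x̄ ↦ S_h(x̄, x_k, ∇f(x_k), B_k, α_k)`. Then for every `K ≥ 1`,
`min_{1 ≤ k ≤ K} ‖x_{k+1} − x_k‖² ≤ 2(F(x₁) − F*)/(L·K)`. -/
theorem stmt14 {N : ℕ} (f : EC N → ℝ) (gradf : EC N → EC N) (L : ℝ) (hL : 0 < L)
    (hfdiff : ∀ z : EC N, HasFDerivAt f (gradDual (gradf z)) z)
    (hlip : ∀ z₁ z₂ : EC N, ‖gradf z₁ - gradf z₂‖ ≤ L * ‖z₁ - z₂‖)
    (h : EC N → ℝ) (hconv : ConvexOn ℝ Set.univ h) (hdiff : Differentiable ℝ h)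
    (F : EC N → ℝ) (hF : F = fun z => h z + f z)
    (C : Set (EC N)) (hCne : C.Nonempty) (hCcl : IsClosed C) (hCcv : Convex ℝ C)
    (Fstar : ℝ) (hFstar : IsGLB (F '' C) Fstar)
    (η : ℝ) (hη : 0 < η)
    (x : ℕ → EC N) (B : ℕ → Matrix (Fin N) (Fin N) ℂ) (α : ℕ → ℝ)
    (hxC : ∀ k, 1 ≤ k → x k ∈ C)
    (hBH : ∀ k, 1 ≤ k → (B k).IsHermitian)
    (hBlb : ∀ k, 1 ≤ k → (B k - η • (1 : Matrix (Fin N) (Fin N) ℂ)).PosSemidef)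
    (hαpos : ∀ k, 1 ≤ k → 0 < α k) (hαle : ∀ k, 1 ≤ k → α k ≤ η / L)
    (hupd : ∀ k, 1 ≤ k →
      IsMinOn (fun xb => Sh h (B k) (α k) (gradf (x k)) (x k) xb) C (x (k + 1))) :
    ∀ K : ℕ, 1 ≤ K → ∃ k, 1 ≤ k ∧ k ≤ K ∧
      ‖x (k + 1) - x k‖ ^ 2 ≤ 2 * (F (x 1) - Fstar) / (L * K) :=
  stmt14_general f gradf L hL hfdiff hlip h hconv F hF C hCcv Fstar hFstar η x B α hxC hBlb hαpos
    hαle hupd
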